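/- arXiv:2605.15748 — 2 statements merged into one kernel-verified Lean document; each statement's English description precedes it below -/
import Mathlib

section
/- Let 1 < p < 2 and X, Y ∈ ℝ^N with X ≠ 0 and Y ≠ 0. Then |X+Y|^p ≥ |X|^p + p|X|^{p−2} (X·Y) + (p(p−1)/2)(|X|+|Y|)^{p−2}|Y|^2. -/
/-!
With `a = |X|`, `b = |Y|`, `s = X·Y` and `q u = |X + uY|² = a² + 2su + b²u²`, the function
`f u = |X + uY|^p = (q u)^(p/2)` has `f 0 = a^p`, `f' 0 = p a^(p-2) s`, and on `[0, 1]`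
`f'' = p q^(p/2-2) ((p-2)(s + b²u)² + q b²) ≥ p(p-1) q^(p/2-1) b² ≥ p(p-1)(a+b)^(p-2) b²`,
using `(s + b²u)² ≤ q b²` (Cauchy–Schwarz), `p < 2` and `q ≤ (a+b)²`. Taylor's formula with this
lower bound on `f''` gives the inequality at `u = 1`.
-/

open Real Set
open scoped RealInnerProductSpace

lemma le_of_hasDerivAt_nonneg {g g' : ℝ → ℝ} {a b : ℝ} (hab : a ≤ b)
    (hg : ∀ x ∈ Icc a b, HasDerivAt g (g' x) x) (hg' : ∀ x ∈ Icc a b, 0 ≤ g' x) :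
    g a ≤ g b :=
  monotoneOn_of_hasDerivWithinAt_nonneg (convex_Icc a b)
    (fun x hx ↦ (hg x hx).continuousAt.continuousWithinAt)
    (fun x hx ↦ (hg x (interior_subset hx)).hasDerivWithinAt)
    (fun x hx ↦ hg' x (interior_subset hx)) (left_mem_Icc.2 hab) (right_mem_Icc.2 hab) hab

lemma taylor_lower_bound_of_le_deriv2 {f f' f'' : ℝ → ℝ} {a b m : ℝ} (hab : a ≤ b)
    (hf : ∀ x ∈ Icc a b, HasDerivAt f (f' x) x) (hf' : ∀ x ∈ Icc a b, HasDerivAt f' (f'' x) x)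
    (hm : ∀ x ∈ Icc a b, m ≤ f'' x) :
    f a + f' a * (b - a) + m / 2 * (b - a) ^ 2 ≤ f b := by
  have hslope : ∀ x ∈ Icc a b, f' a + m * (x - a) ≤ f' x := by
    intro x hx
    have hsub : Icc a x ⊆ Icc a b := Icc_subset_Icc_right hx.2
    have := le_of_hasDerivAt_nonneg (g := fun y ↦ f' y - m * (y - a)) hx.1
      (fun y hy ↦ (hf' y (hsub hy)).sub (((hasDerivAt_id y).sub_const a).const_mul m))
      (fun y hy ↦ by simpa using hm y (hsub hy))
    simp only [sub_self, mul_zero, sub_zero] at this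
    linarith
  have := le_of_hasDerivAt_nonneg (g := fun y ↦ f y - f' a * (y - a) - m / 2 * (y - a) ^ 2) hab
    (fun y hy ↦ ((hf y hy).sub (((hasDerivAt_id y).sub_const a).const_mul (f' a))).sub
      ((((hasDerivAt_id y).sub_const a).pow 2).const_mul (m / 2)))
    (fun y hy ↦ by
      have := hslope y hy
      simp only [mul_one, Nat.cast_ofNat, id_eq, Nat.add_one_sub_one, pow_one, sub_nonneg]
      nlinarith)
  simp only [sub_self, mul_zero, sub_zero, ne_eq, OfNat.ofNat_ne_zero, not_false_eq_true,
    zero_pow] at this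
  linarith

section

variable {p a b s u : ℝ}

lemma hasDerivAt_quadratic_rpow (r : ℝ) (hq : 0 < a ^ 2 + 2 * s * u + b ^ 2 * u ^ 2) :
    HasDerivAt (fun u ↦ (a ^ 2 + 2 * s * u + b ^ 2 * u ^ 2) ^ r)
      (r * (a ^ 2 + 2 * s * u + b ^ 2 * u ^ 2) ^ (r - 1) * (2 * s + 2 * b ^ 2 * u)) u := by
  have hpoly : HasDerivAt (fun u ↦ a ^ 2 + 2 * s * u + b ^ 2 * u ^ 2) (2 * s + 2 * b ^ 2 * u) u := by
    have := (((hasDerivAt_id u).const_mul (2 * s)).const_add (a ^ 2)).add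
      ((hasDerivAt_pow 2 u).const_mul (b ^ 2))
    exact this.congr_deriv (by
      simp only [mul_one, Nat.cast_ofNat, Nat.add_one_sub_one, pow_one, add_right_inj]; ring)
  convert hpoly.rpow_const (p := r) (Or.inl hq.ne') using 1
  ring

lemma quadratic_pos (ha : 0 < a) (hs : -(a * b) < s) (hu : 0 ≤ u) :
    0 < a ^ 2 + 2 * s * u + b ^ 2 * u ^ 2 := by
  rcases hu.eq_or_lt with rfl | hu
  · simp only [mul_zero, add_zero, ne_eq, OfNat.ofNat_ne_zero, not_false_eq_true, zero_pow]
    positivity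
  · nlinarith [sq_nonneg (a - b * u), mul_lt_mul_of_pos_right hs hu]

lemma quadratic_le_add_sq (ha : 0 ≤ a) (hb : 0 ≤ b) (hs : s ≤ a * b) (hu : u ∈ Icc (0 : ℝ) 1) :
    a ^ 2 + 2 * s * u + b ^ 2 * u ^ 2 ≤ (a + b) ^ 2 := by
  obtain ⟨hu0, hu1⟩ := hu
  have hab : 0 ≤ a * b := mul_nonneg ha hb
  nlinarith [mul_le_mul_of_nonneg_right hs hu0, mul_le_mul_of_nonneg_left hu1 hab,
    mul_le_mul_of_nonneg_left (mul_le_one₀ hu1 hu0 hu1) (sq_nonneg b)]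

lemma sq_rpow_div_two (ha : 0 ≤ a) (r : ℝ) : (a ^ 2) ^ (r / 2) = a ^ r := by
  rw [← rpow_natCast_mul ha]
  congr 1
  push_cast
  ring

lemma le_second_deriv_quadratic_rpow (hp1 : 1 < p) (hp2 : p < 2) (ha : 0 < a) (hb : 0 < b)
    (hs : |s| ≤ a * b) (hu : u ∈ Icc (0 : ℝ) 1) (hq : 0 < a ^ 2 + 2 * s * u + b ^ 2 * u ^ 2) :
    p * (p - 1) * (a + b) ^ (p - 2) * b ^ 2 ≤
      p / 2 * ((p / 2 - 1) * (a ^ 2 + 2 * s * u + b ^ 2 * u ^ 2) ^ (p / 2 - 1 - 1) *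
          (2 * s + 2 * b ^ 2 * u) * (2 * s + 2 * b ^ 2 * u) +
        (a ^ 2 + 2 * s * u + b ^ 2 * u ^ 2) ^ (p / 2 - 1) * (2 * b ^ 2)) := by
  set q := a ^ 2 + 2 * s * u + b ^ 2 * u ^ 2 with hq_def
  have hsq : s ^ 2 ≤ (a * b) ^ 2 := sq_le_sq' (abs_le.1 hs).1 (abs_le.1 hs).2
  -- Lagrange's identity: `q b² - (s + b² u)² = a² b² - s²`.
  have hcs : (2 * s + 2 * b ^ 2 * u) * (2 * s + 2 * b ^ 2 * u) ≤ 4 * q * b ^ 2 := by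
    rw [hq_def]; nlinarith
  have hpow : q ^ (p / 2 - 1) = q ^ (p / 2 - 1 - 1) * q := by
    rw [← rpow_add_one hq.ne']; ring_nf
  have hmono : (a + b) ^ (p - 2) ≤ q ^ (p / 2 - 1) := by
    rw [← sq_rpow_div_two (by positivity : 0 ≤ a + b), show (p - 2) / 2 = p / 2 - 1 by ring]
    exact rpow_le_rpow_of_nonpos hq (quadratic_le_add_sq ha.le hb.le (abs_le.1 hs).2 hu)
      (by linarith)
  have hq' : 0 < q ^ (p / 2 - 1 - 1) := rpow_pos_of_pos hq _
  have hneg : (p / 2 - 1) * (4 * q * b ^ 2) * q ^ (p / 2 - 1 - 1) ≤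
      (p / 2 - 1) * ((2 * s + 2 * b ^ 2 * u) * (2 * s + 2 * b ^ 2 * u)) * q ^ (p / 2 - 1 - 1) :=
    mul_le_mul_of_nonneg_right (mul_le_mul_of_nonpos_left hcs (by linarith)) hq'.le
  have hfin := mul_le_mul_of_nonneg_left hmono
    (mul_nonneg (mul_nonneg (by linarith) (by linarith)) (sq_nonneg b) : 0 ≤ p * (p - 1) * b ^ 2)
  rw [hpow] at hfin ⊢
  linarith [mul_le_mul_of_nonneg_left hneg (by linarith : 0 ≤ p / 2)]

lemma le_quadratic_rpow_of_abs_lt (hp1 : 1 < p) (hp2 : p < 2) (ha : 0 < a) (hb : 0 < b)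
    (hs : |s| < a * b) :
    a ^ p + p * a ^ (p - 2) * s + p * (p - 1) / 2 * (a + b) ^ (p - 2) * b ^ 2 ≤
      (a ^ 2 + 2 * s + b ^ 2) ^ (p / 2) := by
  have hq : ∀ u ∈ Icc (0 : ℝ) 1, 0 < a ^ 2 + 2 * s * u + b ^ 2 * u ^ 2 :=
    fun u hu ↦ quadratic_pos ha (abs_lt.1 hs).1 hu.1
  have hf' : ∀ u ∈ Icc (0 : ℝ) 1, HasDerivAt
      (fun u ↦ p / 2 * (a ^ 2 + 2 * s * u + b ^ 2 * u ^ 2) ^ (p / 2 - 1) * (2 * s + 2 * b ^ 2 * u))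
      (p / 2 * ((p / 2 - 1) * (a ^ 2 + 2 * s * u + b ^ 2 * u ^ 2) ^ (p / 2 - 1 - 1) *
          (2 * s + 2 * b ^ 2 * u) * (2 * s + 2 * b ^ 2 * u) +
        (a ^ 2 + 2 * s * u + b ^ 2 * u ^ 2) ^ (p / 2 - 1) * (2 * b ^ 2))) u := by
    intro u hu
    have hlin : HasDerivAt (fun u ↦ 2 * s + 2 * b ^ 2 * u) (2 * b ^ 2) u := by
      simpa using ((hasDerivAt_id u).const_mul (2 * b ^ 2)).const_add (2 * s)
    refine ((((hasDerivAt_quadratic_rpow (p / 2 - 1) (hq u hu))).const_mul (p / 2)).mul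
      hlin).congr_deriv ?_
    ring
  have htaylor := taylor_lower_bound_of_le_deriv2 zero_le_one
    (fun u hu ↦ hasDerivAt_quadratic_rpow (p / 2) (hq u hu)) hf'
    (fun u hu ↦ le_second_deriv_quadratic_rpow hp1 hp2 ha hb hs.le hu (hq u hu))
  simp only [mul_zero, add_zero, mul_one, one_pow, ne_eq, OfNat.ofNat_ne_zero, not_false_eq_true,
    zero_pow, sub_zero] at htaylor
  rw [sq_rpow_div_two ha.le, show p / 2 - 1 = (p - 2) / 2 by ring, sq_rpow_div_two ha.le] at htaylor
  linarith

lemma le_quadratic_rpow (hp1 : 1 < p) (hp2 : p < 2) (ha : 0 < a) (hb : 0 < b)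
    (hs : |s| ≤ a * b) :
    a ^ p + p * a ^ (p - 2) * s + p * (p - 1) / 2 * (a + b) ^ (p - 2) * b ^ 2 ≤
      (a ^ 2 + 2 * s + b ^ 2) ^ (p / 2) := by
  -- For `s = -ab` the quadratic may vanish inside `[0, 1]`, so pass to the limit in `s`.
  have hclosed : IsClosed {s : ℝ | a ^ p + p * a ^ (p - 2) * s +
      p * (p - 1) / 2 * (a + b) ^ (p - 2) * b ^ 2 ≤ (a ^ 2 + 2 * s + b ^ 2) ^ (p / 2)} :=
    isClosed_le (by fun_prop)
      ((by fun_prop : Continuous fun s : ℝ ↦ a ^ 2 + 2 * s + b ^ 2).rpow_const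
        fun _ ↦ Or.inr (by linarith))
  have hIcc := closure_minimal (s := Ioo (-(a * b)) (a * b))
    (fun s hs ↦ le_quadratic_rpow_of_abs_lt hp1 hp2 ha hb (abs_lt.2 hs)) hclosed
  rw [closure_Ioo (by nlinarith)] at hIcc
  exact hIcc (abs_le.1 hs)

end

theorem stmt_2_general {N : ℕ} (p : ℝ) (hp1 : 1 < p) (hp2 : p < 2)
    (X Y : EuclideanSpace ℝ (Fin N)) (hX : X ≠ 0) (hY : Y ≠ 0) :
    ‖X‖ ^ p + p * ‖X‖ ^ (p - 2) * ⟪X, Y⟫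
        + (p * (p - 1) / 2) * (‖X‖ + ‖Y‖) ^ (p - 2) * ‖Y‖ ^ (2 : ℝ)
      ≤ ‖X + Y‖ ^ p := by
  rw [rpow_two, ← sq_rpow_div_two (norm_nonneg (X + Y)), norm_add_sq_real]
  exact le_quadratic_rpow hp1 hp2 (norm_pos_iff.2 hX) (norm_pos_iff.2 hY)
    (abs_real_inner_le_norm X Y)

/-- Quantitative convexity of `X ↦ |X|^p` for `1 < p < 2`: for nonzero vectors
`X, Y ∈ ℝ^N`,
`|X+Y|^p ≥ |X|^p + p|X|^{p−2}(X·Y) + (p(p−1)/2)(|X|+|Y|)^{p−2}|Y|²`. -/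
theorem stmt_2 {N : ℕ} (hN : 1 ≤ N) (p : ℝ) (hp1 : 1 < p) (hp2 : p < 2)
    (X Y : EuclideanSpace ℝ (Fin N)) (hX : X ≠ 0) (hY : Y ≠ 0) :
    ‖X‖ ^ p + p * ‖X‖ ^ (p - 2) * ⟪X, Y⟫
        + (p * (p - 1) / 2) * (‖X‖ + ‖Y‖) ^ (p - 2) * ‖Y‖ ^ (2 : ℝ)
      ≤ ‖X + Y‖ ^ p :=
  stmt_2_general p hp1 hp2 X Y hX hY
end

section
/- Let 2 ≤ p and c_p := min_{0<τ<1/2} ((1−τ)^p − τ^p + pτ^{p−1}). Then 0 < c_p ≤ 1, and c_2 = 1. -/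
open Real

/-- For `p ≥ 2`, the Frank–Seiringer constant
`c_p = inf_{0<τ<1/2} ((1−τ)^p − τ^p + pτ^{p−1})` satisfies `0 < c_p ≤ 1`, and
for `p = 2` it equals `1`. -/
theorem stmt_19 (p : ℝ) (hp : 2 ≤ p) :
    0 < sInf ((fun τ : ℝ => (1 - τ) ^ p - τ ^ p + p * τ ^ (p - 1)) ''
        Set.Ioo (0 : ℝ) (1 / 2))
    ∧ sInf ((fun τ : ℝ => (1 - τ) ^ p - τ ^ p + p * τ ^ (p - 1)) ''
        Set.Ioo (0 : ℝ) (1 / 2)) ≤ 1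
    ∧ (p = 2 → sInf ((fun τ : ℝ => (1 - τ) ^ p - τ ^ p + p * τ ^ (p - 1)) ''
        Set.Ioo (0 : ℝ) (1 / 2)) = 1) := by
  set f : ℝ → ℝ := fun τ : ℝ => (1 - τ) ^ p - τ ^ p + p * τ ^ (p - 1) with hf
  have hp0 : (0:ℝ) < p := by linarith
  have hp1 : (0:ℝ) < p - 1 := by linarith
  -- continuity
  have h1 : Continuous fun x : ℝ => x ^ p := by
    rw [continuous_iff_continuousAt]
    exact fun x => Real.continuousAt_rpow_const x p (Or.inr hp0.le)
  have h2 : Continuous fun x : ℝ => x ^ (p - 1) := by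
    rw [continuous_iff_continuousAt]
    exact fun x => Real.continuousAt_rpow_const x (p - 1) (Or.inr hp1.le)
  have hcont : Continuous f := by
    apply Continuous.add
    · exact (h1.comp (continuous_const.sub continuous_id)).sub h1
    · exact continuous_const.mul h2
  -- pointwise positivity on Icc
  have hpos : ∀ τ ∈ Set.Icc (0:ℝ) (1/2), 0 < f τ := by
    intro τ hτ
    obtain ⟨hτ0, hτ2⟩ := hτ
    rcases lt_or_eq_of_le hτ2 with hlt | heq
    · have hlt2 : τ ^ p < (1 - τ) ^ p :=
        Real.rpow_lt_rpow hτ0 (by linarith) hp0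
      have hnn : 0 ≤ p * τ ^ (p - 1) :=
        mul_nonneg (le_of_lt hp0) (Real.rpow_nonneg hτ0 _)
      simp only [hf]
      linarith
    · subst heq
      have h12 : (1:ℝ) - 1/2 = 1/2 := by norm_num
      have hpow : 0 < ((1:ℝ)/2) ^ (p - 1) :=
        Real.rpow_pos_of_pos (by norm_num) _
      simp only [hf, h12]
      nlinarith
  -- min on compact Icc
  obtain ⟨x0, hx0mem, hx0min⟩ :=
    isCompact_Icc.exists_isMinOn (Set.nonempty_Icc.mpr (by norm_num : (0:ℝ) ≤ 1/2))
      hcont.continuousOn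
  have hx0pos : 0 < f x0 := hpos x0 hx0mem
  have hlb : ∀ y ∈ f '' Set.Ioo (0:ℝ) (1/2), f x0 ≤ y := by
    rintro y ⟨τ, hτ, rfl⟩
    exact hx0min (Set.mem_Icc.mpr ⟨le_of_lt hτ.1, le_of_lt hτ.2⟩)
  have hbdd : BddBelow (f '' Set.Ioo (0:ℝ) (1/2)) := ⟨f x0, hlb⟩
  have hne : (f '' Set.Ioo (0:ℝ) (1/2)).Nonempty :=
    ⟨f (1/4), Set.mem_image_of_mem f (by constructor <;> norm_num)⟩
  refine ⟨lt_of_lt_of_le hx0pos (le_csInf hne hlb), ?_, ?_⟩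
  · -- sInf ≤ 1 via limit as τ → 0⁺
    have hf0 : f 0 = 1 := by
      simp only [hf]
      rw [sub_zero, Real.one_rpow, Real.zero_rpow (ne_of_gt hp0),
        Real.zero_rpow (ne_of_gt hp1)]
      ring
    have htend : Filter.Tendsto f (nhdsWithin 0 (Set.Ioo (0:ℝ) (1/2))) (nhds 1) := by
      rw [← hf0]
      exact (hcont.continuousAt.continuousWithinAt).tendsto
    have hnb : (nhdsWithin (0:ℝ) (Set.Ioo (0:ℝ) (1/2))).NeBot :=
      left_nhdsWithin_Ioo_neBot (by norm_num)
    refine ge_of_tendsto htend ?_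
    filter_upwards [self_mem_nhdsWithin] with τ hτ
    exact csInf_le hbdd (Set.mem_image_of_mem f hτ)
  · -- p = 2
    intro hp2
    subst hp2
    have hconst : ∀ τ ∈ Set.Ioo (0:ℝ) (1/2), f τ = 1 := by
      intro τ hτ
      simp only [hf]
      rw [show (2:ℝ) - 1 = 1 by norm_num, Real.rpow_one,
        show (2:ℝ) = ((2:ℕ):ℝ) by norm_num, Real.rpow_natCast, Real.rpow_natCast]
      ring
    have himg : f '' Set.Ioo (0:ℝ) (1/2) = {1} := by
      apply Set.eq_singleton_iff_nonempty_unique_mem.mpr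
      refine ⟨hne.imp ?_, ?_⟩
      · rintro y hy; exact hy
      · rintro y ⟨τ, hτ, rfl⟩
        exact hconst τ hτ
    rw [himg]
    exact csInf_singleton 1
end
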